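/- arXiv:1106.0870 — 3 statements merged into one kernel-verified Lean document; each statement's English description precedes it below -/
import Mathlib

section
/- Let S₁, S₂ ∈ ℝ^{d×d} with S₂ of rank 1, and let n ≥ 1 and (i₁,…,iₙ) ∈ {1,2}ⁿ be any word in which the letter 2 occurs at least twice, say the product contains blocks S₁^{ℓ₁} S₂ S₁^{ℓ₂} S₂ ⋯. Then writing S₂ = u vᵀ, the spectral radius of S_{i₁}⋯S_{iₙ} equals the product over the cyclic blocks of the scalars |vᵀ S₁^{ℓ_k} u|; in particular for the word S₁^{ℓ₁} S₂ S₁^{ℓ₂} S₂ one has ρ(S₁^{ℓ₁} S₂ S₁^{ℓ₂} S₂) = |vᵀ S₁^{ℓ₁} u| · |vᵀ S₁^{ℓ₂} u|. -/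
/-! Writing `S₂ = u vᵀ`, the word `S₁^ℓ₁ S₂ S₁^ℓ₂ S₂` collapses to the rank-one matrix
`(S₁^ℓ₁ u) (c v)ᵀ` with `c = vᵀ S₁^ℓ₂ u`. A rank-one matrix `a bᵀ` has characteristic polynomial
`X^(d-1) (X - bᵀ a)`, so its spectral radius is `|bᵀ a|`. -/

open Matrix

/-- The spectral radius of a real square matrix: the maximum of the moduli of its
complex eigenvalues. -/
noncomputable def specRad {d : ℕ} (A : Matrix (Fin d) (Fin d) ℝ) : ENNReal :=
  spectralRadius ℂ (A.map (Complex.ofReal))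

open Polynomial

namespace Matrix

variable {n : Type*} [Fintype n]

theorem mul_vecMulVec_mul_mul_vecMulVec {R : Type*} [CommSemiring R] (M N : Matrix n n R)
    (u v : n → R) :
    M * vecMulVec u v * N * vecMulVec u v = vecMulVec (M *ᵥ u) ((v ⬝ᵥ N *ᵥ u) • v) := by
  rw [mul_vecMulVec M, vecMulVec_mul, vecMulVec_mul_vecMulVec, ← dotProduct_mulVec]

variable [DecidableEq n]

theorem eval_charpoly_vecMulVec {R : Type*} [CommRing R] [Nonempty n] (a b : n → R) (μ : R) :
    (vecMulVec a b).charpoly.eval μ = μ ^ (Fintype.card n - 1) * (μ - a ⬝ᵥ b) := by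
  have h : Fintype.card n - 1 + 1 = Fintype.card n := Nat.sub_add_cancel Fintype.card_pos
  rw [charpoly_vecMulVec, eval_sub, eval_smul, eval_pow, eval_pow, eval_X, smul_eq_mul,
    ← h, pow_succ, Nat.add_sub_cancel]
  ring

theorem spectrum_vecMulVec_subset {K : Type*} [Field K] (a b : n → K) :
    spectrum K (vecMulVec a b) ⊆ {0, a ⬝ᵥ b} := by
  cases isEmpty_or_nonempty n
  · simp [spectrum.of_subsingleton]
  intro μ hμ
  rw [mem_spectrum_iff_isRoot_charpoly, IsRoot.def, eval_charpoly_vecMulVec] at hμ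
  rcases mul_eq_zero.mp hμ with hpow | hsub
  · exact Or.inl (pow_eq_zero_iff'.mp hpow).1
  · exact Or.inr (sub_eq_zero.mp hsub)

theorem dotProduct_mem_spectrum_vecMulVec {K : Type*} [Field K] [Nonempty n] (a b : n → K) :
    a ⬝ᵥ b ∈ spectrum K (vecMulVec a b) := by
  rw [mem_spectrum_iff_isRoot_charpoly, IsRoot.def, eval_charpoly_vecMulVec, sub_self, mul_zero]

theorem spectralRadius_vecMulVec {𝕜 : Type*} [NormedField 𝕜] (a b : n → 𝕜) :
    spectralRadius 𝕜 (vecMulVec a b) = ‖a ⬝ᵥ b‖₊ := by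
  refine le_antisymm (iSup₂_le fun μ hμ => ?_) ?_
  · rcases spectrum_vecMulVec_subset a b hμ with rfl | rfl <;> simp
  · cases isEmpty_or_nonempty n
    · simp [dotProduct]
    · exact le_iSup₂ (f := fun μ (_ : μ ∈ spectrum 𝕜 _) => (‖μ‖₊ : ENNReal)) _
        (dotProduct_mem_spectrum_vecMulVec a b)

end Matrix

theorem specRad_vecMulVec {d : ℕ} (a b : Fin d → ℝ) :
    specRad (vecMulVec a b) = ENNReal.ofReal |a ⬝ᵥ b| := by
  have hmap : (vecMulVec a b).map Complex.ofReal =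
      vecMulVec (Complex.ofReal ∘ a) (Complex.ofReal ∘ b) := by
    ext i j; simp [vecMulVec_apply]
  have hdot : (Complex.ofReal ∘ a) ⬝ᵥ (Complex.ofReal ∘ b) = ((a ⬝ᵥ b : ℝ) : ℂ) :=
    (Complex.ofRealHom.map_dotProduct a b).symm
  rw [specRad, hmap, spectralRadius_vecMulVec, hdot, ← Real.enorm_eq_ofReal_abs, enorm_eq_nnnorm,
    Complex.nnnorm_real]

theorem stmt5_general {d : ℕ} (u v : Fin d → ℝ)
    (S₁ S₂ : Matrix (Fin d) (Fin d) ℝ) (hS₂ : S₂ = vecMulVec u v) :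
    ∀ ℓ₁ ℓ₂ : ℕ,
      specRad (S₁ ^ ℓ₁ * S₂ * (S₁ ^ ℓ₂) * S₂) =
        ENNReal.ofReal (|v ⬝ᵥ (S₁ ^ ℓ₁).mulVec u| * |v ⬝ᵥ (S₁ ^ ℓ₂).mulVec u|) := by
  intro ℓ₁ ℓ₂
  rw [hS₂, mul_vecMulVec_mul_mul_vecMulVec, specRad_vecMulVec, dotProduct_smul, smul_eq_mul,
    abs_mul, mul_comm, dotProduct_comm]

theorem stmt5 {d : ℕ} (u v : Fin d → ℝ) (hu : u ≠ 0) (hv : v ≠ 0)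
    (S₁ S₂ : Matrix (Fin d) (Fin d) ℝ) (hS₂ : S₂ = vecMulVec u v) :
    ∀ ℓ₁ ℓ₂ : ℕ,
      specRad (S₁ ^ ℓ₁ * S₂ * (S₁ ^ ℓ₂) * S₂) =
        ENNReal.ofReal (|v ⬝ᵥ (S₁ ^ ℓ₁).mulVec u| * |v ⬝ᵥ (S₁ ^ ℓ₂).mulVec u|) :=
  stmt5_general u v S₁ S₂ hS₂
end

section
/- For the pair S₁ = [[1,0],[1,1]], S₂ = [[0,1],[0,0]], the generalized spectral radius ρ(𝐒) := limsup_{n→∞} max over words (i₁,…,iₙ) ∈ {1,2}ⁿ of ρ(S_{i₁}⋯S_{iₙ})^{1/n} satisfies ρ(𝐒) ≥ 4^{1/5}, by exhibiting the word S₁⁴S₂ of length 5 whose product has spectral radius 4. -/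
open Matrix Filter

/-- The generalized spectral radius of a pair of matrices:
`limsup_{n→∞} max_{(i₁,…,iₙ)} ρ(S_{i₁} ⋯ S_{iₙ})^{1/n}`. -/
noncomputable def genSpecRad {d : ℕ} (S : Fin 2 → Matrix (Fin d) (Fin d) ℝ) : ENNReal :=
  Filter.limsup
    (fun n : ℕ =>
      ⨆ w : Fin n → Fin 2,
        specRad ((List.ofFn fun k => S (w k)).prod) ^ ((1 : ℝ) / n))
    atTop

/-! Every word `W` of length `m` contributes `ρ(W) ^ (1 / m)` to the generalized spectral radius:
its `k`-fold repetition has length `k * m` and spectral radius at least `ρ(W) ^ k`, so the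
sequence under the `limsup` reaches `ρ(W) ^ (1 / m)` infinitely often. For `W = S₁⁴S₂` the
product is the upper triangular matrix `!![0, 1; 0, 4]`, whose spectral radius is `4`. -/

theorem Matrix.spectrum_eq_range_diag_of_isUpperTriangular {n K : Type*} [Fintype n]
    [DecidableEq n] [LinearOrder n] [Field K] {A : Matrix n n K} (hA : A.IsUpperTriangular) :
    spectrum K A = Set.range fun i ↦ A i i := by
  ext r
  simp [mem_spectrum_iff_isRoot_charpoly, charpoly_of_isUpperTriangular A hA,
    Polynomial.eval_prod, Finset.prod_eq_zero_iff, sub_eq_zero, @eq_comm _ r]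

lemma specRad_eq_iSup_of_isUpperTriangular {d : ℕ} {A : Matrix (Fin d) (Fin d) ℝ}
    (hA : A.IsUpperTriangular) : specRad A = ⨆ i, (‖A i i‖₊ : ENNReal) := by
  have hAℂ : (A.map Complex.ofReal).IsUpperTriangular := fun i j hij ↦ by simp [hA hij]
  rw [specRad, spectralRadius, spectrum_eq_range_diag_of_isUpperTriangular hAℂ, iSup_range]
  simp

lemma pow_specRad_le_specRad_pow {d : ℕ} (A : Matrix (Fin d) (Fin d) ℝ) {n : ℕ}
    (hn : n ≠ 0) :
    specRad A ^ n ≤ specRad (A ^ n) := by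
  have hmap : (A ^ n).map Complex.ofReal = A.map Complex.ofReal ^ n :=
    map_pow Complex.ofRealHom.mapMatrix A n
  rw [specRad, specRad, hmap]
  exact spectrum.spectralRadius_pow_le _ n hn

lemma specRad_prod_rpow_le_iSup_words {d : ℕ} (S : Fin 2 → Matrix (Fin d) (Fin d) ℝ)
    (l : List (Fin 2)) :
    specRad (l.map S).prod ^ ((1 : ℝ) / l.length) ≤
      ⨆ w : Fin l.length → Fin 2,
        specRad ((List.ofFn fun k => S (w k)).prod) ^ ((1 : ℝ) / l.length) := by
  refine le_iSup_of_le l.get (le_of_eq ?_)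
  simp

lemma specRad_prod_rpow_le_genSpecRad {d : ℕ} (S : Fin 2 → Matrix (Fin d) (Fin d) ℝ)
    {l : List (Fin 2)} (hl : l ≠ []) :
    specRad (l.map S).prod ^ ((1 : ℝ) / l.length) ≤ genSpecRad S := by
  refine le_limsup_of_frequently_le' (frequently_atTop.2 fun N ↦ ?_)
  set L := (List.replicate (N + 1) l).flatten
  have hlen : L.length = (N + 1) * l.length := by simp [L]
  have hpos : 0 < l.length := List.length_pos_iff.2 hl
  refine ⟨L.length, by rw [hlen]; nlinarith, le_trans ?_ (specRad_prod_rpow_le_iSup_words S L)⟩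
  have hprod : (L.map S).prod = (l.map S).prod ^ (N + 1) := by
    simp [L]
  calc specRad (l.map S).prod ^ ((1 : ℝ) / l.length)
      = (specRad (l.map S).prod ^ (N + 1)) ^ ((1 : ℝ) / L.length) := by
        rw [← ENNReal.rpow_natCast, ← ENNReal.rpow_mul, hlen]
        congr 1
        field_simp
        push_cast
        ring
    _ ≤ specRad (L.map S).prod ^ ((1 : ℝ) / L.length) := by
        rw [hprod]
        gcongr
        exact pow_specRad_le_specRad_pow _ N.succ_ne_zero

theorem stmt16 (S : Fin 2 → Matrix (Fin 2) (Fin 2) ℝ)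
    (h₁ : S 0 = !![1, 0; 1, 1]) (h₂ : S 1 = !![0, 1; 0, 0]) :
    specRad ((S 0) ^ 4 * S 1) = 4 ∧
    (4 : ENNReal) ^ ((1 : ℝ) / 5) ≤ genSpecRad S := by
  have hW : S 0 ^ 4 * S 1 = !![0, 1; 0, 4] := by
    rw [h₁, h₂]
    norm_num [pow_succ, mul_fin_two]
  have hρ : specRad (S 0 ^ 4 * S 1) = 4 := by
    have htri : (!![0, 1; 0, 4] : Matrix (Fin 2) (Fin 2) ℝ).IsUpperTriangular := by
      intro i j hij
      fin_cases i <;> fin_cases j <;> simp_all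
    rw [hW, specRad_eq_iSup_of_isUpperTriangular htri, ← Finset.sup_univ_eq_iSup]
    simp [Fin.univ_succ]
  have hword : ([0, 0, 0, 0, 1].map S).prod = S 0 ^ 4 * S 1 := by
    simp [pow_succ, mul_assoc]
  refine ⟨hρ, ?_⟩
  have h := specRad_prod_rpow_le_genSpecRad S (l := [0, 0, 0, 0, 1]) (by simp)
  rw [hword, hρ] at h
  simpa using h
end

section
/- For every positive integer L, choosing ε = 1/(L+1), the pair S₁ = [[1, ε],[0,1]], S₂ = [[1,-1],[1,-1]] satisfies max_{1 ≤ ℓ ≤ L} ρ(S₁^ℓ S₂)^{1/(ℓ+1)} = max_{1 ≤ ℓ ≤ L} (ℓ/(L+1))^{1/(ℓ+1)} < 1 ≤ sup_{ℓ ≥ 1} (ℓ/(L+1))^{1/(ℓ+1)}; in particular, no word of length at most L+1 of the form S₁^ℓ S₂ attains the supremum sup_{ℓ≥1} ρ(S₁^ℓ S₂)^{1/(ℓ+1)}. -/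
open Matrix

lemma spec_eq (t : ℝ) : spectrum ℂ (!![1+(t:ℂ), -(1+t); 1, -1] : Matrix (Fin 2) (Fin 2) ℂ) = {0, (t:ℂ)} := by
  ext z
  rw [spectrum.mem_iff, Matrix.isUnit_iff_isUnit_det, isUnit_iff_ne_zero, Matrix.det_fin_two]
  simp only [Matrix.algebraMap_eq_diagonal, Matrix.sub_apply, Matrix.diagonal_apply,
    Matrix.of_apply, Matrix.cons_val', Matrix.cons_val_zero, Matrix.cons_val_one,
    Matrix.head_cons, Matrix.head_fin_const, Pi.algebraMap_apply, Algebra.algebraMap_self,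
    RingHom.id_apply, if_true]
  simp only [if_pos rfl, if_neg (by decide : (0:Fin 2) ≠ 1), if_neg (by decide : (1:Fin 2) ≠ 0)]
  rw [not_not, show ((z - (1+(t:ℂ))) * (z - -1) - (0 - -(1+(t:ℂ))) * (0-1)) = z * (z - t) from by ring,
    mul_eq_zero, sub_eq_zero]
  simp [Set.mem_insert_iff]

lemma sr_eq (t : ℝ) (ht : 0 ≤ t) :
    spectralRadius ℂ (!![1+(t:ℂ), -(1+t); 1, -1] : Matrix (Fin 2) (Fin 2) ℂ) = ENNReal.ofReal t := by
  rw [spectralRadius, spec_eq]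
  rw [iSup_insert, iSup_singleton]
  simp [Real.nnnorm_of_nonneg ht, ENNReal.ofReal]
  exact NNReal.coe_injective (by simp [Real.coe_toNNReal t ht])

lemma pow_tri (ε : ℝ) (ℓ : ℕ) :
    (!![1, ε; 0, 1] : Matrix (Fin 2) (Fin 2) ℝ) ^ ℓ = !![1, ℓ * ε; 0, 1] := by
  induction ℓ with
  | zero => simp [Matrix.one_fin_two]
  | succ n ih =>
    rw [pow_succ, ih]
    ext i j
    fin_cases i <;> fin_cases j <;>
      simp [Matrix.mul_apply, Fin.sum_univ_two] <;> push_cast <;> ring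

lemma specRad_val (ε : ℝ) (ℓ : ℕ) (hε : 0 ≤ ε) :
    specRad ((!![1, ε; 0, 1] : Matrix (Fin 2) (Fin 2) ℝ) ^ ℓ * !![1, -1; 1, -1]) =
      ENNReal.ofReal (ℓ * ε) := by
  rw [pow_tri]
  have hmap : ((!![1, ℓ * ε; 0, 1] : Matrix (Fin 2) (Fin 2) ℝ) * !![1, -1; 1, -1]).map
      Complex.ofReal = !![1+((ℓ*ε : ℝ):ℂ), -(1+((ℓ*ε:ℝ):ℂ)); 1, -1] := by
    ext i j
    fin_cases i <;> fin_cases j <;>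
      simp [Matrix.mul_apply, Fin.sum_univ_two, Matrix.map_apply] <;> push_cast <;> ring
  rw [specRad, hmap, sr_eq _ (by positivity)]

theorem stmt18 (L : ℕ) (hL : 1 ≤ L) (ε : ℝ) (hε : ε = 1 / (L + 1))
    (S₁ S₂ : Matrix (Fin 2) (Fin 2) ℝ)
    (h₁ : S₁ = !![1, ε; 0, 1]) (h₂ : S₂ = !![1, -1; 1, -1]) :
    (⨆ ℓ ∈ Finset.Icc 1 L, specRad (S₁ ^ ℓ * S₂) ^ ((1 : ℝ) / (ℓ + 1))) =
      (⨆ ℓ ∈ Finset.Icc 1 L,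
        ENNReal.ofReal ((ℓ : ℝ) / (L + 1)) ^ ((1 : ℝ) / (ℓ + 1))) ∧
    (⨆ ℓ ∈ Finset.Icc 1 L, specRad (S₁ ^ ℓ * S₂) ^ ((1 : ℝ) / (ℓ + 1))) < 1 ∧
    1 ≤ ⨆ ℓ : ℕ, ⨆ _ : 1 ≤ ℓ,
        ENNReal.ofReal ((ℓ : ℝ) / (L + 1)) ^ ((1 : ℝ) / (ℓ + 1)) := by
  have hLpos : (0:ℝ) < (L:ℝ) + 1 := by positivity
  have hεpos : 0 ≤ ε := by rw [hε]; positivity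
  have heq : (⨆ ℓ ∈ Finset.Icc 1 L, specRad (S₁ ^ ℓ * S₂) ^ ((1 : ℝ) / (ℓ + 1))) =
      (⨆ ℓ ∈ Finset.Icc 1 L,
        ENNReal.ofReal ((ℓ : ℝ) / (L + 1)) ^ ((1 : ℝ) / (ℓ + 1))) := by
    refine iSup_congr fun ℓ => iSup_congr fun _ => ?_
    rw [h₁, h₂, specRad_val ε ℓ hεpos, hε, mul_one_div]
  refine ⟨heq, ?_, ?_⟩
  · rw [heq]
    have hc : (ENNReal.ofReal ((L : ℝ) / (L + 1))) ^ ((1:ℝ) / (L + 1)) < 1 := by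
      apply ENNReal.rpow_lt_one
      · rw [ENNReal.ofReal_lt_one]
        rw [div_lt_one hLpos]; linarith
      · positivity
    refine lt_of_le_of_lt (iSup₂_le fun ℓ hℓ => ?_) hc
    have hℓL : ℓ ≤ L := (Finset.mem_Icc.mp hℓ).2
    calc ENNReal.ofReal ((ℓ : ℝ) / (L + 1)) ^ ((1:ℝ) / (ℓ + 1))
        ≤ ENNReal.ofReal ((L : ℝ) / (L + 1)) ^ ((1:ℝ) / (ℓ + 1)) := by
          apply ENNReal.rpow_le_rpow _ (by positivity)
          refine ENNReal.ofReal_le_ofReal ?_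
          have : (ℓ:ℝ) ≤ (L:ℝ) := Nat.cast_le.mpr hℓL
          gcongr
      _ ≤ ENNReal.ofReal ((L : ℝ) / (L + 1)) ^ ((1:ℝ) / (L + 1)) := by
          apply ENNReal.rpow_le_rpow_of_exponent_ge
          · rw [ENNReal.ofReal_le_one]
            rw [div_le_one hLpos]; linarith
          · apply div_le_div_of_nonneg_left one_pos.le (by positivity)
            have : (ℓ:ℝ) ≤ (L:ℝ) := Nat.cast_le.mpr hℓL
            linarith
  · refine le_iSup_of_le (L + 1) (le_iSup_of_le (Nat.le_add_left 1 L) ?_)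
    have : ((L + 1 : ℕ) : ℝ) / ((L:ℝ) + 1) = 1 := by
      push_cast; field_simp
    rw [this, ENNReal.ofReal_one, ENNReal.one_rpow]
end
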